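/- Let n ≥ 3 be an integer and c₀ > 0, define u(ρ) = √(1 − 1/(1 + c₀·sinh^{n−2}(ρ)·cosh²(ρ))), U(ρ) := ρ + ∫_ρ^∞ (1 − u(s)) ds, and r(ρ) := ln( (e^{U(ρ)} + 1)/(e^{U(ρ)} − 1) ) for ρ > 0. Then lim_{ρ→∞} ( sinh²(r(ρ))·sinh²(ρ) − 1 ) / r(ρ)^n = −1/(n·c₀). -/

import Mathlib

/-!
Since `sinh r = 1 / sinh U`, the numerator is
`(sinh² ρ − sinh² U) / sinh² U = −sinh (U − ρ) sinh (U + ρ) / sinh² U`, while `r ~ 2 e^{−U}`.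
So everything hinges on the size of `U − ρ = ∫_ρ^∞ (1 − u)`. Writing
`P = c₀ sinh^{n−2} cosh² ~ c₀ e^{nρ} / 2ⁿ`, one has
`1 − u = 1 / ((1 + P)(1 + u)) ~ 2^{n−1} e^{−ns} / c₀`, hence `U − ρ ~ 2^{n−1} e^{−nρ} / (n c₀)`,
and the quotient tends to
`−(2^{n−1} / (n c₀)) · 2 / 2ⁿ = −1 / (n c₀)`.
-/

open Real Filter MeasureTheory Set Topology

lemma tendsto_sinh_div_exp : Tendsto (fun x => sinh x / exp x) atTop (𝓝 (1 / 2)) := by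
  have h : Tendsto (fun x => (1 - (exp x)⁻¹ ^ 2) / 2) atTop (𝓝 (1 / 2)) := by
    simpa using (tendsto_const_nhds (x := (1 : ℝ))).sub
      (tendsto_exp_atTop.inv_tendsto_atTop.pow 2) |>.div_const 2
  refine h.congr fun x => ?_
  rw [sinh_eq, exp_neg]
  field_simp

lemma tendsto_cosh_div_exp : Tendsto (fun x => cosh x / exp x) atTop (𝓝 (1 / 2)) := by
  have h : Tendsto (fun x => (1 + (exp x)⁻¹ ^ 2) / 2) atTop (𝓝 (1 / 2)) := by
    simpa using (tendsto_const_nhds (x := (1 : ℝ))).add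
      (tendsto_exp_atTop.inv_tendsto_atTop.pow 2) |>.div_const 2
  refine h.congr fun x => ?_
  rw [cosh_eq, exp_neg]
  field_simp

lemma sinh_sq_sub_sinh_sq (a b : ℝ) : sinh a ^ 2 - sinh b ^ 2 = sinh (a - b) * sinh (a + b) := by
  rw [sinh_sub, sinh_add]
  linear_combination sinh b ^ 2 * cosh_sq a - sinh a ^ 2 * cosh_sq b

lemma sinh_eq_mul_dslope (x : ℝ) : sinh x = x * dslope sinh 0 x := by
  simpa using (sub_smul_dslope sinh 0 x).symm

/-- `log coth (x / 2)`, since `coth (x / 2) = (eˣ + 1) / (eˣ − 1)`. -/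
noncomputable def logCothHalf (x : ℝ) : ℝ := log ((exp x + 1) / (exp x - 1))

lemma logCothHalf_pos {x : ℝ} (hx : 0 < x) : 0 < logCothHalf x := by
  have hone : 1 < exp x := one_lt_exp_iff.2 hx
  exact log_pos ((one_lt_div (by linarith)).2 (by linarith))

lemma sinh_logCothHalf {x : ℝ} (hx : 0 < x) : sinh (logCothHalf x) = (sinh x)⁻¹ := by
  have hone : 1 < exp x := one_lt_exp_iff.2 hx
  have hsub : exp x - 1 ≠ 0 := by linarith
  have hsq : exp x ^ 2 - 1 ≠ 0 := by nlinarith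
  rw [logCothHalf, sinh_log (by apply div_pos <;> linarith), sinh_eq, exp_neg]
  field_simp
  ring

lemma tendsto_logCothHalf_mul_exp : Tendsto (fun x => logCothHalf x * exp x) atTop (𝓝 2) := by
  have hy : Tendsto (fun x => exp x - 1) atTop atTop :=
    tendsto_atTop_add_const_right _ _ tendsto_exp_atTop
  have hlog : Tendsto (fun x => (exp x - 1) * log (1 + 2 / (exp x - 1))) atTop (𝓝 2) :=
    (tendsto_mul_log_one_add_div_atTop 2).comp hy
  have hratio : Tendsto (fun x => 1 + (exp x - 1)⁻¹) atTop (𝓝 1) := by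
    simpa using tendsto_const_nhds.add hy.inv_tendsto_atTop
  have hprod := hlog.mul hratio
  rw [mul_one] at hprod
  refine hprod.congr' ?_
  filter_upwards [eventually_gt_atTop 0] with x hx
  have hone : 1 < exp x := one_lt_exp_iff.2 hx
  have hsub : exp x - 1 ≠ 0 := by linarith
  have harg : 1 + 2 / (exp x - 1) = (exp x + 1) / (exp x - 1) := by
    field_simp
    ring
  rw [logCothHalf, harg]
  field_simp
  ring

lemma one_sub_sqrt_one_sub_inv {p : ℝ} (hp : 0 ≤ p) :
    1 - √(1 - 1 / (1 + p)) = ((1 + p) * (1 + √(1 - 1 / (1 + p))))⁻¹ := by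
  have hsq : √(1 - 1 / (1 + p)) ^ 2 = 1 - 1 / (1 + p) :=
    sq_sqrt (sub_nonneg.2 ((div_le_one (by linarith)).2 (by linarith)))
  refine eq_inv_of_mul_eq_one_left ?_
  linear_combination (-(1 + p)) * hsq + mul_inv_cancel₀ (by linarith : 1 + p ≠ 0)

lemma tendsto_one_add_mul_sinh_pow_mul_cosh_sq_div_exp_pow (c : ℝ) (m : ℕ) :
    Tendsto (fun s => (1 + c * sinh s ^ m * cosh s ^ 2) / exp s ^ (m + 2)) atTop
      (𝓝 (c / 2 ^ (m + 2))) := by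
  have h := (tendsto_exp_atTop.inv_tendsto_atTop.pow (m + 2)).add
    (((tendsto_sinh_div_exp.pow m).const_mul c).mul (tendsto_cosh_div_exp.pow 2))
  rw [show (0 : ℝ) ^ (m + 2) + c * (1 / 2) ^ m * (1 / 2) ^ 2 = c / 2 ^ (m + 2) by
    simp only [one_div, inv_pow]; field_simp; ring] at h
  simp only [Pi.inv_apply] at h
  refine h.congr fun s => ?_
  rw [inv_pow, div_pow, div_pow, pow_add (exp s) m 2]
  field_simp

lemma tendsto_one_sub_sqrt_mul_exp {c : ℝ} (hc : 0 < c) (m : ℕ) :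
    Tendsto (fun s => (1 - √(1 - 1 / (1 + c * sinh s ^ m * cosh s ^ 2))) * exp ((m + 2 : ℕ) * s))
      atTop (𝓝 (2 ^ (m + 1) / c)) := by
  have hq := tendsto_one_add_mul_sinh_pow_mul_cosh_sq_div_exp_pow c m
  have hp : Tendsto (fun s => 1 + c * sinh s ^ m * cosh s ^ 2) atTop atTop :=
    (hq.pos_mul_atTop (by positivity) ((tendsto_pow_atTop (by omega)).comp tendsto_exp_atTop)).congr
      fun s => div_mul_cancel₀ _ (by positivity)
  have hsqrt : Tendsto (fun s => √(1 - 1 / (1 + c * sinh s ^ m * cosh s ^ 2))) atTop (𝓝 1) := by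
    simpa using ((tendsto_const_nhds (x := (1 : ℝ))).sub hp.inv_tendsto_atTop).sqrt
  have h := (hq.mul ((tendsto_const_nhds (x := (1 : ℝ))).add hsqrt)).inv₀ (by positivity)
  rw [show (c / 2 ^ (m + 2) * (1 + 1))⁻¹ = 2 ^ (m + 1) / c by
    rw [pow_succ 2 (m + 1)]; field_simp; ring] at h
  refine h.congr' ?_
  filter_upwards [eventually_ge_atTop 0] with s hs
  rw [one_sub_sqrt_one_sub_inv (by positivity), exp_nat_mul, div_mul_eq_mul_div, inv_div,
    div_eq_inv_mul]

lemma integral_Ioi_exp_neg_mul {N : ℝ} (hN : 0 < N) (ρ : ℝ) :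
    ∫ s in Ioi ρ, exp (-N * s) = exp (-N * ρ) / N := by
  rw [integral_exp_mul_Ioi (by linarith), neg_div_neg_eq]

lemma tendsto_integral_Ioi_mul_exp {f : ℝ → ℝ} {N b : ℝ} (hN : 0 < N) (hf : Measurable f)
    (hlim : Tendsto (fun s => f s * exp (N * s)) atTop (𝓝 b)) :
    Tendsto (fun ρ => (∫ s in Ioi ρ, f s) * exp (N * ρ)) atTop (𝓝 (b / N)) := by
  have hexp : ∀ s, exp (N * s) * exp (-N * s) = 1 := fun s => by
    rw [← exp_add, neg_mul, add_neg_cancel, exp_zero]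
  have hint_exp : ∀ (c ρ : ℝ), IntegrableOn (fun s => c * exp (-N * s)) (Ioi ρ) := fun c ρ =>
    (exp_neg_integrableOn_Ioi ρ hN).const_mul c
  rw [Metric.tendsto_atTop]
  intro δ hδ
  obtain ⟨R, hR⟩ := Metric.tendsto_atTop.1 hlim (N * δ / 2) (by positivity)
  refine ⟨R, fun ρ hρ => ?_⟩
  have hbound : ∀ s ∈ Ioi ρ, ‖f s - b * exp (-N * s)‖ ≤ N * δ / 2 * exp (-N * s) := by
    intro s hs
    have hs' := (hR s (hρ.trans (le_of_lt hs))).le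
    rw [dist_eq_norm] at hs'
    calc ‖f s - b * exp (-N * s)‖ = ‖f s * exp (N * s) - b‖ * exp (-N * s) := by
          rw [norm_eq_abs, norm_eq_abs, ← abs_of_pos (exp_pos (-N * s)), ← abs_mul,
            abs_of_pos (exp_pos (-N * s)), sub_mul, mul_assoc, hexp, mul_one]
      _ ≤ N * δ / 2 * exp (-N * s) := by gcongr
  have hbound_ae : ∀ᵐ s ∂volume.restrict (Ioi ρ),
      ‖f s - b * exp (-N * s)‖ ≤ N * δ / 2 * exp (-N * s) :=
    (ae_restrict_iff' measurableSet_Ioi).2 (Eventually.of_forall hbound)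
  have hint : IntegrableOn (fun s => f s - b * exp (-N * s)) (Ioi ρ) :=
    (hint_exp _ ρ).mono' (by fun_prop) hbound_ae
  have hdiff : (∫ s in Ioi ρ, f s) * exp (N * ρ) - b / N
      = (∫ s in Ioi ρ, (f s - b * exp (-N * s))) * exp (N * ρ) := by
    have hsplit : ∫ s in Ioi ρ, f s
        = (∫ s in Ioi ρ, (f s - b * exp (-N * s))) + ∫ s in Ioi ρ, b * exp (-N * s) := by
      rw [← integral_add hint (hint_exp b ρ)]
      simp only [sub_add_cancel]
    rw [hsplit, integral_const_mul, integral_Ioi_exp_neg_mul hN]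
    linear_combination (b / N) * hexp ρ
  have hle := norm_integral_le_of_norm_le (hint_exp _ ρ) hbound_ae
  rw [integral_const_mul, integral_Ioi_exp_neg_mul hN] at hle
  rw [dist_eq_norm, hdiff, norm_mul, norm_of_nonneg (exp_pos _).le]
  calc ‖∫ s in Ioi ρ, (f s - b * exp (-N * s))‖ * exp (N * ρ)
      ≤ N * δ / 2 * (exp (-N * ρ) / N) * exp (N * ρ) := by gcongr
    _ = δ / 2 * (N / N) * (exp (N * ρ) * exp (-N * ρ)) := by ring
    _ = δ / 2 := by rw [div_self hN.ne', hexp, mul_one, mul_one]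
    _ < δ := by linarith

/-- `dslope sinh 0` stands for `sinh ε / ε`, extended continuously by `1` at `ε = 0`. -/
lemma sinh_logCothHalf_sq_mul_sinh_sq_sub_one_div_eq (n : ℕ) (ρ : ℝ) {x : ℝ} (hx : 0 < x) :
    (sinh (logCothHalf x) ^ 2 * sinh ρ ^ 2 - 1) / logCothHalf x ^ n =
      -(dslope sinh 0 (x - ρ) * ((x - ρ) * exp (n * ρ)) * exp ((n - 1) * (x - ρ)) *
        (sinh (ρ + x) / exp (ρ + x)) * (sinh x / exp x)⁻¹ ^ 2 * (logCothHalf x * exp x)⁻¹ ^ n) := by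
  have hL : logCothHalf x ≠ 0 := (logCothHalf_pos hx).ne'
  have hexp : exp (ρ * n) * exp ((x - ρ) * (n - 1)) * exp x ^ 2 = exp (ρ + x) * exp x ^ n := by
    simp only [← exp_nat_mul, ← exp_add]
    congr 1
    push_cast
    ring
  have hdiff : sinh x ^ 2 - sinh ρ ^ 2 = sinh (x - ρ) * sinh (ρ + x) := by
    rw [sinh_sq_sub_sinh_sq, add_comm]
  rw [sinh_logCothHalf hx]
  calc ((sinh x)⁻¹ ^ 2 * sinh ρ ^ 2 - 1) / logCothHalf x ^ n
      = -((x - ρ) * dslope sinh 0 (x - ρ) * sinh (ρ + x) / (sinh x ^ 2 * logCothHalf x ^ n)) := by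
        rw [← sinh_eq_mul_dslope, ← hdiff]
        field_simp
        ring
    _ = _ := by
        simp only [inv_pow, mul_pow, mul_inv, div_pow]
        field_simp
        linear_combination (x - ρ) * dslope sinh 0 (x - ρ) * sinh (ρ + x) * hexp

lemma tendsto_sinh_logCothHalf_sq_mul_sinh_sq_sub_one_div {U : ℝ → ℝ} {n : ℕ} {a : ℝ}
    (hn : 0 < n) (hU : Tendsto (fun ρ => (U ρ - ρ) * exp (n * ρ)) atTop (𝓝 a)) :
    Tendsto (fun ρ => (sinh (logCothHalf (U ρ)) ^ 2 * sinh ρ ^ 2 - 1) / logCothHalf (U ρ) ^ n)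
      atTop (𝓝 (-(2 * a) / 2 ^ n)) := by
  have hε : Tendsto (fun ρ => U ρ - ρ) atTop (𝓝 0) := by
    have hdecay : Tendsto (fun ρ => exp (-(n * ρ))) atTop (𝓝 0) :=
      tendsto_exp_neg_atTop_nhds_zero.comp
        (tendsto_id.const_mul_atTop (Nat.cast_pos.2 hn))
    have h := hU.mul hdecay
    rw [mul_zero] at h
    refine h.congr fun ρ => ?_
    rw [mul_assoc, ← exp_add, add_neg_cancel, exp_zero, mul_one]
  have hUtop : Tendsto U atTop atTop :=
    (tendsto_id.atTop_add hε).congr fun ρ => add_sub_cancel ρ (U ρ)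
  have hdslope : Tendsto (fun ρ => dslope sinh 0 (U ρ - ρ)) atTop (𝓝 1) := by
    have h := (continuousAt_dslope_same.2 differentiableAt_sinh).tendsto.comp hε
    rwa [dslope_same, Real.deriv_sinh, cosh_zero] at h
  have hexp : Tendsto (fun ρ => exp ((n - 1) * (U ρ - ρ))) atTop (𝓝 1) := by
    have h := hε.const_mul ((n : ℝ) - 1)
    rw [mul_zero] at h
    exact tendsto_exp_nhds_zero_nhds_one.comp h
  have hsum := tendsto_sinh_div_exp.comp (tendsto_id.atTop_add_atTop hUtop)
  have hsinh := ((tendsto_sinh_div_exp.comp hUtop).inv₀ (by norm_num)).pow 2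
  have hlog := ((tendsto_logCothHalf_mul_exp.comp hUtop).inv₀ two_ne_zero).pow n
  have h := ((((hdslope.mul hU).mul hexp).mul hsum).mul hsinh).mul hlog |>.neg
  rw [show -(1 * a * 1 * (1 / 2) * (1 / 2)⁻¹ ^ 2 * (2 : ℝ)⁻¹ ^ n) = -(2 * a) / 2 ^ n by
    simp only [one_div, inv_inv, inv_pow]; field_simp] at h
  refine h.congr' ?_
  filter_upwards [hUtop.eventually_gt_atTop 0] with ρ hρ
  exact (sinh_logCothHalf_sq_mul_sinh_sq_sub_one_div_eq n ρ hρ).symm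

/-- With `u(ρ) = √(1 − 1/(1 + c₀ sinh^{n−2}(ρ) cosh²(ρ)))`, `U(ρ) = ρ + ∫_ρ^∞ (1 − u)`, and
`r(ρ) = ln((e^{U(ρ)} + 1)/(e^{U(ρ)} − 1))`, one has
`lim_{ρ→∞} (sinh²(r(ρ)) sinh²(ρ) − 1)/r(ρ)ⁿ = −1/(n c₀)`. -/
theorem stmt_9 (n : ℕ) (hn : 3 ≤ n) (c₀ : ℝ) (hc₀ : 0 < c₀)
    (u : ℝ → ℝ)
    (hu : ∀ ρ : ℝ, u ρ = Real.sqrt (1 - 1 / (1 + c₀ * Real.sinh ρ ^ (n - 2) * Real.cosh ρ ^ 2)))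
    (U : ℝ → ℝ)
    (hU : ∀ ρ : ℝ, U ρ = ρ + ∫ s in Set.Ioi ρ, (1 - u s))
    (r : ℝ → ℝ)
    (hr : ∀ ρ : ℝ, r ρ = Real.log ((Real.exp (U ρ) + 1) / (Real.exp (U ρ) - 1))) :
    Tendsto (fun ρ : ℝ =>
        (Real.sinh (r ρ) ^ 2 * Real.sinh ρ ^ 2 - 1) / r ρ ^ n) atTop
      (nhds (-1 / ((n : ℝ) * c₀))) := by
  obtain ⟨m, rfl⟩ : ∃ m, n = m + 2 := ⟨n - 2, by omega⟩
  have hu' : u = fun s => √(1 - 1 / (1 + c₀ * sinh s ^ m * cosh s ^ 2)) :=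
    funext fun s => by simpa using hu s
  have hr' : r = fun ρ => logCothHalf (U ρ) := funext hr
  have hUρ : Tendsto (fun ρ => (U ρ - ρ) * exp ((m + 2 : ℕ) * ρ)) atTop
      (𝓝 (2 ^ (m + 1) / c₀ / (m + 2 : ℕ))) := by
    simp only [hU, add_sub_cancel_left]
    subst hu'
    exact tendsto_integral_Ioi_mul_exp (by positivity) (by fun_prop)
      (tendsto_one_sub_sqrt_mul_exp hc₀ m)
  subst hr'
  convert tendsto_sinh_logCothHalf_sq_mul_sinh_sq_sub_one_div (by omega) hUρ using 2
  rw [pow_succ 2 (m + 1)]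
  field_simp
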